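/- arXiv:alg-geom/9702010 — 2 statements merged into one kernel-verified Lean document; each statement's English description precedes it below -/
import Mathlib

section
/- For every integer n ≥ 2, the following identity holds in the ring of formal power series in the variables X_i (i ∈ I) with coefficients in the Laurent polynomial ring ℤ[t,t^{−1}]: Σ_{α∈ℕ[I]} ( Σ_{γ,β∈ℕ[I], γ+β=α} Σ_{κ∈𝔎(γ)} Σ_{λ∈𝔎(β)} t^{K(κ)−K(λ)} ) X^α = ∏_{1≤q≤p≤n−1} ( (1 − t·X^{θ_{q,p}})·(1 − t^{−1}·X^{θ_{q,p}}) )^{−1}. -/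
/-!
Since `t^{K(κ)-K(λ)} = t^{K(κ)} (t⁻¹)^{K(λ)}`, the left-hand series is the Cauchy product of the
two weighted Kostant generating functions `Σ_κ c^{K(κ)} X^{Σ κ_θ θ}` for `c = t` and `c = t⁻¹`.
A Kostant partition is an independent choice of a multiplicity for each positive coroot, so each
of these is the product over `θ` of the geometric series `Σ_k c^k X^{kθ}`, which is inverted
by `1 - c X^θ`.
-/

open scoped BigOperators

/-- Pairs `(q, p)` with `q ≤ p`, indexing the positive coroots of `SL_n`
(vertices of the Dynkin diagram are zero-indexed, so `Fin (n-1)` is `I = {1,…,n-1}`). -/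
def KPair (n : ℕ) : Type := {pq : Fin (n - 1) × Fin (n - 1) // pq.1 ≤ pq.2}

instance (n : ℕ) : Fintype (KPair n) :=
  inferInstanceAs (Fintype {pq : Fin (n - 1) × Fin (n - 1) // pq.1 ≤ pq.2})

/-- The positive coroot `θ_{q,p}`: the indicator vector of the interval `{q, …, p}`. -/
noncomputable def theta {n : ℕ} (pq : KPair n) : Fin (n - 1) →₀ ℕ :=
  Finsupp.equivFunOnFinite.symm fun i => if pq.1.1 ≤ i ∧ i ≤ pq.1.2 then 1 else 0

/-- The element of `ℕ[I]` of which `κ` is a Kostant partition: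
`Σ_{1≤q≤p≤n−1} κ_{p,q} · θ_{q,p}`. -/
noncomputable def weight {n : ℕ} (κ : KPair n →₀ ℕ) : Fin (n - 1) →₀ ℕ :=
  κ.sum fun pq c => c • theta pq

/-- The set `𝔎(γ)` of Kostant partitions of `γ`. -/
def KostantSet {n : ℕ} (γ : Fin (n - 1) →₀ ℕ) : Set (KPair n →₀ ℕ) :=
  {κ | weight κ = γ}

/-- `K(κ)`, the number of parts of the Kostant partition `κ`. -/
def numParts {n : ℕ} (κ : KPair n →₀ ℕ) : ℕ := κ.sum fun _ c => c

/-- The formal power series with prescribed coefficients: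
`genFun c = Σ_γ c(γ) · X^γ`. -/
def genFun {σ R : Type*} (c : (σ →₀ ℕ) → R) : MvPowerSeries σ R := c

open MvPowerSeries

section Products

open Finset.HasAntidiagonal

variable {σ R A B : Type*} [CommSemiring R]

lemma finsum_mem_mul_finsum_mem {s : Set A} {t : Set B} (hs : s.Finite) (ht : t.Finite)
    (f : A → R) (g : B → R) :
    (∑ᶠ x ∈ s, f x) * (∑ᶠ y ∈ t, g y) = ∑ᶠ p ∈ s ×ˢ t, f p.1 * g p.2 := by
  lift s to Finset A using hs
  lift t to Finset B using ht
  rw [← Finset.coe_product, finsum_mem_coe_finset, finsum_mem_coe_finset, finsum_mem_coe_finset,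
    Finset.sum_mul_sum, Finset.sum_product]

theorem genFun_finsum_mul_genFun_finsum {w : A → σ →₀ ℕ} {v : B → σ →₀ ℕ}
    (hw : ∀ γ, {x | w x = γ}.Finite) (hv : ∀ β, {y | v y = β}.Finite) (f : A → R) (g : B → R) :
    genFun (fun γ => ∑ᶠ x ∈ {x | w x = γ}, f x) * genFun (fun β => ∑ᶠ y ∈ {y | v y = β}, g y) =
      genFun (fun α => ∑ᶠ p ∈ {p : A × B | w p.1 + v p.2 = α}, f p.1 * g p.2) := by
  classical
  ext α
  have hunion : {p : A × B | w p.1 + v p.2 = α} =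
      ⋃ γβ ∈ (↑(antidiagonal α) : Set ((σ →₀ ℕ) × (σ →₀ ℕ))),
        {x | w x = γβ.1} ×ˢ {y | v y = γβ.2} := by
    ext p
    simp
  have hdisj : (antidiagonal α : Set ((σ →₀ ℕ) × (σ →₀ ℕ))).PairwiseDisjoint
      fun γβ => {x | w x = γβ.1} ×ˢ {y | v y = γβ.2} := by
    rintro ⟨γ, β⟩ - ⟨γ', β'⟩ - hne
    rw [Function.onFun, Set.disjoint_prod]
    by_cases hγ : γ = γ'
    · exact .inr ((Set.disjoint_singleton.2 fun hβ => hne (Prod.ext hγ hβ)).preimage v)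
    · exact .inl ((Set.disjoint_singleton.2 hγ).preimage w)
  rw [coeff_mul]
  change _ = ∑ᶠ p ∈ {p : A × B | w p.1 + v p.2 = α}, f p.1 * g p.2
  rw [hunion, finsum_mem_biUnion hdisj (Finset.finite_toSet _)
    (fun γβ _ => (hw γβ.1).prod (hv γβ.2)), finsum_mem_coe_finset]
  exact Finset.sum_congr rfl fun γβ _ => finsum_mem_mul_finsum_mem (hw _) (hv _) f g

end Products

section GeomSeries

variable {σ R : Type*}

noncomputable def geomSeries [Semiring R] (Θ : σ →₀ ℕ) (a : R) : MvPowerSeries σ R :=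
  genFun fun α => ∑ᶠ k ∈ {k : ℕ | k • Θ = α}, a ^ k

lemma nsmul_left_injective_of_ne_zero {M : Type*} [AddCommMonoid M] [PartialOrder M]
    [CanonicallyOrderedAdd M] [AddLeftStrictMono M] {x : M} (hx : x ≠ 0) :
    Function.Injective fun k : ℕ => k • x :=
  (nsmul_left_strictMono (pos_iff_ne_zero.2 hx)).injective

variable [Semiring R] {Θ : σ →₀ ℕ}

lemma coeff_nsmul_geomSeries (hΘ : Θ ≠ 0) (a : R) (k : ℕ) :
    coeff (k • Θ) (geomSeries Θ a) = a ^ k := by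
  change ∑ᶠ j ∈ {j : ℕ | j • Θ = k • Θ}, a ^ j = a ^ k
  rw [show {j : ℕ | j • Θ = k • Θ} = {k} from
    Set.ext fun j => (nsmul_left_injective_of_ne_zero hΘ).eq_iff, finsum_mem_singleton]

lemma coeff_geomSeries_of_forall_ne {α : σ →₀ ℕ} (h : ∀ k : ℕ, k • Θ ≠ α) (a : R) :
    coeff α (geomSeries Θ a) = 0 :=
  finsum_mem_of_eqOn_zero fun k hk => absurd hk (h k)

theorem geomSeries_eq_one_add_monomial_mul (hΘ : Θ ≠ 0) (a : R) :
    geomSeries Θ a = 1 + monomial Θ a * geomSeries Θ a := by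
  classical
  ext α
  rw [map_add, coeff_one, coeff_monomial_mul]
  by_cases hα : ∃ k : ℕ, k • Θ = α
  · obtain ⟨_ | k, rfl⟩ := hα
    · rw [coeff_nsmul_geomSeries hΘ, zero_nsmul, if_pos rfl, if_neg (by simpa using hΘ), pow_zero,
        add_zero]
    · rw [succ_nsmul, if_neg (by simp [hΘ]), if_pos le_add_self, add_tsub_cancel_right,
        coeff_nsmul_geomSeries hΘ, ← succ_nsmul, coeff_nsmul_geomSeries hΘ, pow_succ']
      exact (zero_add _).symm
  · push Not at hα
    have hα₀ : α ≠ 0 := by simpa [eq_comm] using hα 0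
    have hsub : Θ ≤ α → ∀ k : ℕ, k • Θ ≠ α - Θ := fun hle k hk =>
      hα (k + 1) (by rw [succ_nsmul, hk, tsub_add_cancel_of_le hle])
    rw [coeff_geomSeries_of_forall_ne hα, if_neg hα₀]
    split_ifs with hle
    · rw [coeff_geomSeries_of_forall_ne (hsub hle), mul_zero, add_zero]
    · rw [add_zero]

theorem one_sub_monomial_mul_geomSeries {R : Type*} [Ring R] (hΘ : Θ ≠ 0) (a : R) :
    (1 - monomial Θ a) * geomSeries Θ a = 1 := by
  rw [sub_mul, one_mul, sub_eq_iff_eq_add, ← geomSeries_eq_one_add_monomial_mul hΘ]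

end GeomSeries

section KostantSeries

open Finsupp

variable {ι σ R : Type*} [Fintype ι]

noncomputable def kostantSeries [CommSemiring R] (Θ : ι → σ →₀ ℕ) (a : ι → R) :
    MvPowerSeries σ R :=
  genFun fun α => ∑ᶠ μ ∈ {μ : ι →₀ ℕ | linearCombination ℕ Θ μ = α}, ∏ i, a i ^ μ i

lemma linearCombination_eq_sum_univ {S M : Type*} [Semiring S] [AddCommMonoid M] [Module S M]
    (v : ι → M) (μ : ι →₀ S) : linearCombination S v μ = ∑ i, μ i • v i :=
  Finsupp.sum_fintype _ _ fun i => zero_smul S (v i)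

variable {Θ : ι → σ →₀ ℕ}

lemma finite_setOf_linearCombination_eq (hΘ : ∀ i, Θ i ≠ 0) (α : σ →₀ ℕ) :
    {μ : ι →₀ ℕ | linearCombination ℕ Θ μ = α}.Finite := by
  classical
  have hinj : Function.Injective fun (μ : ι →₀ ℕ) (i : ι) => μ i • Θ i := fun μ ν h =>
    Finsupp.ext fun i => nsmul_left_injective_of_ne_zero (hΘ i) (congrFun h i)
  refine ((Set.Finite.pi fun _ => Set.finite_Iic α).preimage hinj.injOn).subset ?_
  rintro μ rfl i -
  rw [Set.mem_Iic, linearCombination_eq_sum_univ]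
  exact Finset.single_le_sum (fun j _ => zero_le (a := μ j • Θ j)) (Finset.mem_univ i)

theorem kostantSeries_eq_prod_geomSeries [CommSemiring R] (hΘ : ∀ i, Θ i ≠ 0) (a : ι → R) :
    kostantSeries Θ a = ∏ i, geomSeries (Θ i) (a i) := by
  classical
  ext α
  have hK := finite_setOf_linearCombination_eq hΘ α
  let summands : (ι →₀ ℕ) → ι →₀ σ →₀ ℕ := fun μ => equivFunOnFinite.symm fun i => μ i • Θ i
  change ∑ᶠ μ ∈ {μ : ι →₀ ℕ | linearCombination ℕ Θ μ = α}, ∏ i, a i ^ μ i = _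
  rw [finsum_mem_eq_finite_toFinset_sum _ hK, coeff_prod]
  refine Finset.sum_of_injOn summands ?_ ?_ ?_ ?_
  · exact fun μ _ ν _ h => Finsupp.ext fun i =>
      nsmul_left_injective_of_ne_zero (hΘ i) (DFunLike.congr_fun h i)
  · intro μ hμ
    simpa [summands, Finset.mem_finsuppAntidiag, ← linearCombination_eq_sum_univ] using hμ
  · intro l hl hl'
    obtain ⟨i, hi⟩ : ∃ i, ∀ k : ℕ, k • Θ i ≠ l i := by
      by_contra! h
      choose k hk using h
      refine hl' ⟨equivFunOnFinite.symm k, ?_, ?_⟩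
      · simpa [linearCombination_eq_sum_univ, hk, Finset.mem_finsuppAntidiag] using hl
      · ext1 i
        simp [summands, hk]
    exact Finset.prod_eq_zero (Finset.mem_univ i) (coeff_geomSeries_of_forall_ne hi _)
  · intro μ _
    simp [summands, coeff_nsmul_geomSeries (hΘ _)]

theorem kostantSeries_mul_prod_one_sub_monomial [CommRing R] (hΘ : ∀ i, Θ i ≠ 0) (a : ι → R) :
    kostantSeries Θ a * ∏ i, (1 - monomial (Θ i) (a i)) = 1 := by
  rw [kostantSeries_eq_prod_geomSeries hΘ, ← Finset.prod_mul_distrib]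
  exact Finset.prod_eq_one fun i _ =>
    (mul_comm _ _).trans (one_sub_monomial_mul_geomSeries (hΘ i) (a i))

end KostantSeries

lemma theta_ne_zero {n : ℕ} (pq : KPair n) : theta pq ≠ 0 :=
  Finsupp.ne_iff.2 ⟨pq.1.1, by simp [theta, pq.2]⟩

lemma prod_pow_eq_pow_numParts {M : Type*} [CommMonoid M] (x : M) {n : ℕ} (κ : KPair n →₀ ℕ) :
    ∏ pq, x ^ κ pq = x ^ numParts κ := by
  rw [Finset.prod_pow_eq_pow_sum, numParts, Finsupp.sum_fintype _ _ fun _ => rfl]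

open LaurentPolynomial in
theorem poincare_generating_function_general (n : ℕ) :
    genFun (fun α : Fin (n - 1) →₀ ℕ =>
        ∑ᶠ kl ∈ {p : (KPair n →₀ ℕ) × (KPair n →₀ ℕ) | weight p.1 + weight p.2 = α},
          (T ((numParts kl.1 : ℤ) - (numParts kl.2 : ℤ)) : LaurentPolynomial ℤ)) *
      ∏ pq : KPair n,
        ((1 - MvPowerSeries.monomial (R := LaurentPolynomial ℤ) (theta pq) (T 1)) *
         (1 - MvPowerSeries.monomial (R := LaurentPolynomial ℤ) (theta pq) (T (-1)))) = 1 := by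
  have hfin := finite_setOf_linearCombination_eq (theta_ne_zero (n := n))
  have hcauchy : genFun (fun α : Fin (n - 1) →₀ ℕ =>
        ∑ᶠ kl ∈ {p : (KPair n →₀ ℕ) × (KPair n →₀ ℕ) | weight p.1 + weight p.2 = α},
          (T ((numParts kl.1 : ℤ) - (numParts kl.2 : ℤ)) : LaurentPolynomial ℤ)) =
      kostantSeries theta (fun _ => T 1) * kostantSeries theta (fun _ => T (-1)) := by
    rw [kostantSeries, kostantSeries, genFun_finsum_mul_genFun_finsum hfin hfin]
    refine congrArg genFun (funext fun α => finsum_mem_congr rfl fun _ _ => ?_)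
    rw [prod_pow_eq_pow_numParts, prod_pow_eq_pow_numParts, T_pow, T_pow, mul_one, mul_neg_one,
      ← T_sub]
  rw [hcauchy, Finset.prod_mul_distrib, mul_mul_mul_comm,
    kostantSeries_mul_prod_one_sub_monomial theta_ne_zero,
    kostantSeries_mul_prod_one_sub_monomial theta_ne_zero, one_mul]

open LaurentPolynomial in
/-- Theorem 2.7 of the paper, combinatorial form: in
`ℤ[t,t⁻¹][[X_i, i ∈ I]]`,
`Σ_α (Σ_{γ+β=α} Σ_{κ∈𝔎(γ)} Σ_{λ∈𝔎(β)} t^{K(κ)−K(λ)}) X^α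
  = ∏_{1≤q≤p≤n−1} ((1 − t·X^{θ_{q,p}})(1 − t⁻¹·X^{θ_{q,p}}))^{−1}`;
equivalently, the product of the left-hand side with
`∏_{1≤q≤p≤n−1} (1 − t·X^{θ_{q,p}})(1 − t⁻¹·X^{θ_{q,p}})` is `1`. -/
theorem poincare_generating_function (n : ℕ) (hn : 2 ≤ n) :
    genFun (fun α : Fin (n - 1) →₀ ℕ =>
        ∑ᶠ kl ∈ {p : (KPair n →₀ ℕ) × (KPair n →₀ ℕ) | weight p.1 + weight p.2 = α},
          (T ((numParts kl.1 : ℤ) - (numParts kl.2 : ℤ)) : LaurentPolynomial ℤ)) *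
      ∏ pq : KPair n,
        ((1 - MvPowerSeries.monomial (R := LaurentPolynomial ℤ) (theta pq) (T 1)) *
         (1 - MvPowerSeries.monomial (R := LaurentPolynomial ℤ) (theta pq) (T (-1)))) = 1 :=
  poincare_generating_function_general n
end

section
/- Let a ≠ b be complex numbers, R = ℂ[z], T₁ = R/(z−a), and T₂ = R/(z−a) ⊕ R/(z−b), and let f : T₁ → T₂ be a nonzero R-module homomorphism. Call an admissible chain a sequence of pairs (A₀,B₀) ⊆ (A₁,B₁) ⊆ (A₂,B₂) ⊆ (A₃,B₃) with A_k ⊆ T₁ and B_k ⊆ T₂ submodules satisfying f(A_k) ⊆ B_k, (A₀,B₀) = (0,0), (A₃,B₃) = (T₁,T₂); say the k-th step has type 𝗂 if A_k = A_{k−1} and length(B_k/B_{k−1}) = 1, and type 𝗃 if B_k = B_{k−1} and length(A_k/A_{k−1}) = 1. Then there are exactly 2 admissible chains with step types (𝗂,𝗂,𝗃), exactly 1 with step types (𝗂,𝗃,𝗂), and none with step types (𝗃,𝗂,𝗂). -/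
open Order in
/-- The length of a module: the supremum of the lengths of strictly increasing chains of
submodules (the Krull dimension of the submodule lattice). -/
noncomputable def moduleLength (R : Type*) [Ring R] (M : Type*) [AddCommGroup M]
    [Module R M] : WithBot ℕ∞ :=
  krullDim (Submodule R M)

/-- An admissible chain for a `ℂ[z]`-module map `f : T₁ → T₂`: an increasing sequence of
pairs `(A₀,B₀) ⊆ (A₁,B₁) ⊆ (A₂,B₂) ⊆ (A₃,B₃)` of submodules `A_k ⊆ T₁`, `B_k ⊆ T₂` with
`f(A_k) ⊆ B_k`, `(A₀,B₀) = (0,0)` and `(A₃,B₃) = (T₁,T₂)`. -/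
structure AdmChain {M N : Type*} [AddCommGroup M] [Module (Polynomial ℂ) M]
    [AddCommGroup N] [Module (Polynomial ℂ) N] (f : M →ₗ[Polynomial ℂ] N) where
  A : Fin 4 → Submodule (Polynomial ℂ) M
  B : Fin 4 → Submodule (Polynomial ℂ) N
  monoA : Monotone A
  monoB : Monotone B
  compat : ∀ k, (A k).map f ≤ B k
  A_zero : A 0 = ⊥
  B_zero : B 0 = ⊥
  A_last : A 3 = ⊤
  B_last : B 3 = ⊤

/-- The `(k+1)`-st step of an admissible chain has type `𝗂`:
`A_{k+1} = A_k` and `length(B_{k+1}/B_k) = 1`. -/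
def StepI {M N : Type*} [AddCommGroup M] [Module (Polynomial ℂ) M]
    [AddCommGroup N] [Module (Polynomial ℂ) N] {f : M →ₗ[Polynomial ℂ] N}
    (c : AdmChain f) (k : Fin 3) : Prop :=
  c.A k.succ = c.A k.castSucc ∧
  moduleLength (Polynomial ℂ)
    (↥(c.B k.succ) ⧸ (c.B k.castSucc).comap (c.B k.succ).subtype) = 1

/-- The `(k+1)`-st step of an admissible chain has type `𝗃`:
`B_{k+1} = B_k` and `length(A_{k+1}/A_k) = 1`. -/
def StepJ {M N : Type*} [AddCommGroup M] [Module (Polynomial ℂ) M]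
    [AddCommGroup N] [Module (Polynomial ℂ) N] {f : M →ₗ[Polynomial ℂ] N}
    (c : AdmChain f) (k : Fin 3) : Prop :=
  c.B k.succ = c.B k.castSucc ∧
  moduleLength (Polynomial ℂ)
    (↥(c.A k.succ) ⧸ (c.A k.castSucc).comap (c.A k.succ).subtype) = 1

/-!
Since `T₁` is simple, an admissible chain of any of the three types is determined by one
submodule `S ⊆ T₂`: the chains of type `(𝗂,𝗂,𝗃)` are `(0,0) ⊆ (0,S) ⊆ (0,T₂) ⊆ (T₁,T₂)` and those
of type `(𝗂,𝗃,𝗂)` are `(0,0) ⊆ (0,S) ⊆ (T₁,S) ⊆ (T₁,T₂)`, where `S` must be both an atom and a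
coatom of the submodule lattice of `T₂`, in the second case also containing `f(T₁)`; a chain of
type `(𝗃,𝗂,𝗂)` would force `f(T₁) = 0`. As the annihilators `(z - a)` and `(z - b)` are coprime,
that lattice is the product of the two-element lattices of submodules of `ℂ[z]/(z - a)` and
`ℂ[z]/(z - b)`, whose atoms, which are also its coatoms, are the two coordinate lines. Finally
`f(T₁) ≅ T₁` is itself an atom, so it is the only one containing `f(T₁)`.
-/

open Polynomial

section Length

variable {R M : Type*} [Ring R] [AddCommGroup M] [Module R M]

theorem moduleLength_eq_one_iff : moduleLength R M = 1 ↔ IsSimpleModule R M := by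
  rw [moduleLength, Order.krullDim_eq_one_iff_of_boundedOrder, isSimpleModule_iff]

theorem moduleLength_quotient_eq_one_iff {A B : Submodule R M} (h : A ≤ B) :
    moduleLength R (B ⧸ A.comap B.subtype) = 1 ↔ A ⋖ B := by
  rw [moduleLength_eq_one_iff, covBy_iff_quot_is_simple h]

end Length

section SimpleOrderProd

variable {α β : Type*} [PartialOrder α] [BoundedOrder α] [IsSimpleOrder α]
  [PartialOrder β] [BoundedOrder β] [IsSimpleOrder β]

theorem Prod.bot_covBy_iff_of_isSimpleOrder {p : α × β} :
    ⊥ ⋖ p ↔ p = (⊤, ⊥) ∨ p = (⊥, ⊤) := by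
  rw [Prod.covBy_iff]
  simp [Prod.ext_iff, eq_comm (a := ⊥), and_comm]

theorem Prod.covBy_top_iff_of_isSimpleOrder {p : α × β} :
    p ⋖ ⊤ ↔ p = (⊤, ⊥) ∨ p = (⊥, ⊤) := by
  rw [Prod.covBy_iff]
  simp [Prod.ext_iff, and_comm, or_comm]

theorem Prod.card_bot_covBy_of_isSimpleOrder : Nat.card {p : α × β // ⊥ ⋖ p} = 2 := by
  simp_rw [Prod.bot_covBy_iff_of_isSimpleOrder]
  exact (Nat.card_coe_set_eq {((⊤ : α), (⊥ : β)), (⊥, ⊤)}).trans (Set.ncard_pair (by simp))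

end SimpleOrderProd

namespace Submodule

variable {R M₁ M₂ : Type*} [CommRing R] [AddCommGroup M₁] [Module R M₁] [AddCommGroup M₂]
  [Module R M₂]

theorem prod_comap_inl_comap_inr_of_isCoprime
    (h : IsCoprime (Module.annihilator R M₁) (Module.annihilator R M₂))
    (N : Submodule R (M₁ × M₂)) :
    (N.comap (LinearMap.inl R M₁ M₂)).prod (N.comap (LinearMap.inr R M₁ M₂)) = N := by
  obtain ⟨i, hi, j, hj, hij⟩ := Ideal.isCoprime_iff_exists.1 h
  refine le_antisymm (fun x hx => by simpa using N.add_mem hx.1 hx.2) (fun x hx => ⟨?_, ?_⟩)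
  -- `j = 1 - i` kills `M₂` and fixes `M₁`; symmetrically for `i`.
  · have : j • x = (x.1, 0) := by
      ext
      · simp [← sub_eq_of_eq_add' hij.symm, sub_smul, Module.mem_annihilator.1 hi]
      · simp [Module.mem_annihilator.1 hj]
    simpa [this] using N.smul_mem j hx
  · have : i • x = (0, x.2) := by
      ext
      · simp [Module.mem_annihilator.1 hi]
      · simp [← sub_eq_of_eq_add hij.symm, sub_smul, Module.mem_annihilator.1 hj]
    simpa [this] using N.smul_mem i hx

def prodOrderIsoOfIsCoprime
    (h : IsCoprime (Module.annihilator R M₁) (Module.annihilator R M₂)) :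
    Submodule R (M₁ × M₂) ≃o Submodule R M₁ × Submodule R M₂ :=
  Equiv.toOrderIso
    { toFun N := (N.comap (LinearMap.inl R M₁ M₂), N.comap (LinearMap.inr R M₁ M₂))
      invFun p := p.1.prod p.2
      left_inv := prod_comap_inl_comap_inr_of_isCoprime h
      right_inv _ := Prod.ext (prod_comap_inl _ _) (prod_comap_inr _ _) }
    (fun _ _ hN => ⟨comap_mono hN, comap_mono hN⟩) (fun _ _ hp => prod_mono hp.1 hp.2)

variable [IsSimpleModule R M₁] [IsSimpleModule R M₂]

theorem bot_covBy_iff_covBy_top_of_isCoprime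
    (h : IsCoprime (Module.annihilator R M₁) (Module.annihilator R M₂))
    (N : Submodule R (M₁ × M₂)) : ⊥ ⋖ N ↔ N ⋖ ⊤ := by
  rw [← apply_covBy_apply_iff (prodOrderIsoOfIsCoprime h), OrderIso.map_bot,
    ← apply_covBy_apply_iff (prodOrderIsoOfIsCoprime h), OrderIso.map_top,
    Prod.bot_covBy_iff_of_isSimpleOrder, Prod.covBy_top_iff_of_isSimpleOrder]

theorem card_bot_covBy_of_isCoprime
    (h : IsCoprime (Module.annihilator R M₁) (Module.annihilator R M₂)) :
    Nat.card {N : Submodule R (M₁ × M₂) // ⊥ ⋖ N} = 2 := by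
  rw [← Prod.card_bot_covBy_of_isSimpleOrder (α := Submodule R M₁) (β := Submodule R M₂)]
  refine Nat.card_congr ((prodOrderIsoOfIsCoprime h).toEquiv.subtypeEquiv fun N => ?_)
  rw [← apply_covBy_apply_iff (prodOrderIsoOfIsCoprime h), OrderIso.map_bot]
  rfl

end Submodule

section PolynomialQuotient

variable {K : Type*} [Field K]

theorem isSimpleModule_quotient_span_X_sub_C (a : K) :
    IsSimpleModule K[X] (K[X] ⧸ Ideal.span {X - C a}) := by
  rw [isSimpleModule_iff_isCoatom]
  exact Ideal.isMaximal_def.mp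
    (PrincipalIdealRing.isMaximal_of_irreducible (irreducible_X_sub_C a))

theorem isCoprime_annihilator_quotient_span_X_sub_C {a b : K} (hab : a ≠ b) :
    IsCoprime (Module.annihilator K[X] (K[X] ⧸ Ideal.span {X - C a}))
      (Module.annihilator K[X] (K[X] ⧸ Ideal.span {X - C b})) := by
  rw [Ideal.annihilator_quotient, Ideal.annihilator_quotient, Ideal.isCoprime_span_singleton_iff]
  exact isCoprime_X_sub_C_of_isUnit_sub (sub_ne_zero.mpr hab).isUnit

end PolynomialQuotient

theorem LinearMap.isAtom_range_of_ne_zero {R M N : Type*} [Ring R] [AddCommGroup M] [Module R M]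
    [AddCommGroup N] [Module R N] [IsSimpleModule R M] {f : M →ₗ[R] N} (hf : f ≠ 0) :
    IsAtom (range f) := by
  rw [← isSimpleModule_iff_isAtom]
  exact IsSimpleModule.congr (LinearEquiv.ofInjective f (injective_of_ne_zero hf)).symm

namespace AdmChain

variable {M N : Type*} [AddCommGroup M] [Module ℂ[X] M] [AddCommGroup N] [Module ℂ[X] N]
  {f : M →ₗ[ℂ[X]] N}

theorem ext {c d : AdmChain f} (hA : c.A = d.A) (hB : c.B = d.B) : c = d := by
  cases c; cases d; cases hA; cases hB; rfl

theorem stepI_iff (c : AdmChain f) (k : Fin 3) :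
    StepI c k ↔ c.A k.succ = c.A k.castSucc ∧ c.B k.castSucc ⋖ c.B k.succ := by
  rw [StepI, moduleLength_quotient_eq_one_iff (c.monoB k.castSucc_le_succ)]

theorem stepJ_iff (c : AdmChain f) (k : Fin 3) :
    StepJ c k ↔ c.B k.succ = c.B k.castSucc ∧ c.A k.castSucc ⋖ c.A k.succ := by
  rw [StepJ, moduleLength_quotient_eq_one_iff (c.monoA k.castSucc_le_succ)]

theorem iij_iff (c : AdmChain f) :
    (StepI c 0 ∧ StepI c 1 ∧ StepJ c 2) ↔
      (c.A 1 = ⊥ ∧ c.A 2 = ⊥ ∧ c.B 2 = ⊤) ∧ ⊥ ⋖ c.B 1 ∧ c.B 1 ⋖ ⊤ ∧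
        (⊥ : Submodule ℂ[X] M) ⋖ ⊤ := by
  have := c.A_zero; have := c.B_zero; have := c.A_last; have := c.B_last
  simp only [stepI_iff, stepJ_iff]
  change (c.A 1 = c.A 0 ∧ c.B 0 ⋖ c.B 1) ∧ (c.A 2 = c.A 1 ∧ c.B 1 ⋖ c.B 2) ∧
    (c.B 3 = c.B 2 ∧ c.A 2 ⋖ c.A 3) ↔ _
  grind

theorem iji_iff (c : AdmChain f) :
    (StepI c 0 ∧ StepJ c 1 ∧ StepI c 2) ↔
      (c.A 1 = ⊥ ∧ c.A 2 = ⊤ ∧ c.B 2 = c.B 1) ∧ ⊥ ⋖ c.B 1 ∧ c.B 1 ⋖ ⊤ ∧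
        (⊥ : Submodule ℂ[X] M) ⋖ ⊤ := by
  have := c.A_zero; have := c.B_zero; have := c.A_last; have := c.B_last
  simp only [stepI_iff, stepJ_iff]
  change (c.A 1 = c.A 0 ∧ c.B 0 ⋖ c.B 1) ∧ (c.B 2 = c.B 1 ∧ c.A 1 ⋖ c.A 2) ∧
    (c.A 3 = c.A 2 ∧ c.B 2 ⋖ c.B 3) ↔ _
  grind

variable (f) in
noncomputable def mkIIJ (S : Submodule ℂ[X] N) : AdmChain f where
  A := ![⊥, ⊥, ⊥, ⊤]
  B := ![⊥, S, ⊤, ⊤]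
  monoA := Fin.monotone_iff_le_succ.mpr fun i => by fin_cases i <;> simp
  monoB := Fin.monotone_iff_le_succ.mpr fun i => by fin_cases i <;> simp
  compat k := by fin_cases k <;> simp
  A_zero := rfl
  B_zero := rfl
  A_last := rfl
  B_last := rfl

variable (f) in
noncomputable def mkIJI (S : Submodule ℂ[X] N) (hS : LinearMap.range f ≤ S) : AdmChain f where
  A := ![⊥, ⊥, ⊤, ⊤]
  B := ![⊥, S, S, ⊤]
  monoA := Fin.monotone_iff_le_succ.mpr fun i => by fin_cases i <;> simp
  monoB := Fin.monotone_iff_le_succ.mpr fun i => by fin_cases i <;> simp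
  compat k := by fin_cases k <;> simp [hS]
  A_zero := rfl
  B_zero := rfl
  A_last := rfl
  B_last := rfl

variable [IsSimpleModule ℂ[X] M]

noncomputable def iijEquiv : {c : AdmChain f // StepI c 0 ∧ StepI c 1 ∧ StepJ c 2} ≃
    {S : Submodule ℂ[X] N // ⊥ ⋖ S ∧ S ⋖ ⊤} where
  toFun c := ⟨c.1.B 1, ((iij_iff c.1).1 c.2).2.1, ((iij_iff c.1).1 c.2).2.2.1⟩
  invFun S := ⟨mkIIJ f S, (iij_iff _).2 ⟨⟨rfl, rfl, rfl⟩, S.2.1, S.2.2, bot_covBy_top⟩⟩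
  left_inv := by
    rintro ⟨c, hc⟩
    obtain ⟨⟨h₁, h₂, h₃⟩, -⟩ := (iij_iff c).1 hc
    refine Subtype.ext (AdmChain.ext (funext fun k => ?_) (funext fun k => ?_)).symm <;>
      fin_cases k <;> simp [mkIIJ, c.A_zero, c.B_zero, c.A_last, c.B_last, h₁, h₂, h₃]
  right_inv _ := rfl

noncomputable def ijiEquiv : {c : AdmChain f // StepI c 0 ∧ StepJ c 1 ∧ StepI c 2} ≃
    {S : Submodule ℂ[X] N // ⊥ ⋖ S ∧ S ⋖ ⊤ ∧ LinearMap.range f ≤ S} where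
  toFun c :=
    have h := (iji_iff c.1).1 c.2
    ⟨c.1.B 1, h.2.1, h.2.2.1, by
      rw [LinearMap.range_eq_map, ← h.1.2.1, ← h.1.2.2]
      exact c.1.compat 2⟩
  invFun S :=
    ⟨mkIJI f S S.2.2.2, (iji_iff _).2 ⟨⟨rfl, rfl, rfl⟩, S.2.1, S.2.2.1, bot_covBy_top⟩⟩
  left_inv := by
    rintro ⟨c, hc⟩
    obtain ⟨⟨h₁, h₂, h₃⟩, -⟩ := (iji_iff c).1 hc
    refine Subtype.ext (AdmChain.ext (funext fun k => ?_) (funext fun k => ?_)).symm <;>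
      fin_cases k <;> simp [mkIJI, c.A_zero, c.B_zero, c.A_last, c.B_last, h₁, h₂, h₃]
  right_inv _ := rfl

theorem eq_zero_of_stepJ_zero (c : AdmChain f) (h : StepJ c 0) : f = 0 := by
  obtain ⟨hB₁, hA₁⟩ := (stepJ_iff c 0).1 h
  have hB₁ : c.B 1 = ⊥ := hB₁.trans c.B_zero
  have hA₁ : c.A 1 = ⊤ := (eq_bot_or_eq_top _).resolve_left (c.A_zero ▸ hA₁).ne'
  have hf := c.compat 1
  rwa [hA₁, hB₁, ← LinearMap.range_eq_map, le_bot_iff, LinearMap.range_eq_bot] at hf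

end AdmChain

/-- Lemma 3.5.1(b) of the paper: for `a ≠ b`, `T₁ = ℂ[z]/(z−a)`,
`T₂ = ℂ[z]/(z−a) ⊕ ℂ[z]/(z−b)` and `f : T₁ → T₂` a nonzero `ℂ[z]`-module map, there are
exactly `2` admissible chains with step types `(𝗂,𝗂,𝗃)`, exactly `1` with step types
`(𝗂,𝗃,𝗂)`, and none with step types `(𝗃,𝗂,𝗂)`. -/
theorem filtration_count_nonzero_map (a b : ℂ) (hab : a ≠ b)
    (f : (Polynomial ℂ ⧸ Ideal.span {Polynomial.X - Polynomial.C a}) →ₗ[Polynomial ℂ]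
        ((Polynomial ℂ ⧸ Ideal.span {Polynomial.X - Polynomial.C a}) ×
         (Polynomial ℂ ⧸ Ideal.span {Polynomial.X - Polynomial.C b})))
    (hf : f ≠ 0) :
    Nat.card {c : AdmChain f // StepI c 0 ∧ StepI c 1 ∧ StepJ c 2} = 2 ∧
    Nat.card {c : AdmChain f // StepI c 0 ∧ StepJ c 1 ∧ StepI c 2} = 1 ∧
    Nat.card {c : AdmChain f // StepJ c 0 ∧ StepI c 1 ∧ StepI c 2} = 0 := by
  have := isSimpleModule_quotient_span_X_sub_C a
  have := isSimpleModule_quotient_span_X_sub_C b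
  have hcop := isCoprime_annihilator_quotient_span_X_sub_C hab
  have hatom_iff_coatom := Submodule.bot_covBy_iff_covBy_top_of_isCoprime hcop
  have hrange := (LinearMap.isAtom_range_of_ne_zero hf).bot_covBy
  refine ⟨?_, ?_, ?_⟩
  · rw [Nat.card_congr AdmChain.iijEquiv, ← Submodule.card_bot_covBy_of_isCoprime hcop]
    simp_rw [← hatom_iff_coatom, and_self]
  · rw [Nat.card_congr AdmChain.ijiEquiv, Nat.card_eq_one_iff_exists]
    refine ⟨⟨_, hrange, (hatom_iff_coatom _).1 hrange, le_rfl⟩, fun S => Subtype.ext ?_⟩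
    exact ((bot_covBy_iff.1 S.2.1).le_iff.1 S.2.2.2).resolve_left hrange.ne' |>.symm
  · have : IsEmpty {c : AdmChain f // StepJ c 0 ∧ StepI c 1 ∧ StepI c 2} :=
      ⟨fun c => hf (c.1.eq_zero_of_stepJ_zero c.2.1)⟩
    exact Nat.card_of_isEmpty
end
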